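/- arXiv:1609.02768 — 2 statements merged into one kernel-verified Lean document; each statement's English description precedes it below -/
import Mathlib

section
/- Let A be a finite-dimensional CDGA over ℂ, V a finite-dimensional ℂ-vector space, T ∈ End(V), and η ∈ A¹ a cocycle (dη = 0). Define d_{η,T} on A ⊗ V by d_{η,T}(a⊗v) = da⊗v + η·a ⊗ T(v). Then d_{η,T} preserves the decomposition of A ⊗ V into A ⊗ V_λ over the generalized eigenspaces V_λ of T, and for each i, H^i(A⊗V, d_{η,T}) ≠ 0 if and only if there exists an eigenvalue λ of T such that H^i(A, d_{λη}) ≠ 0, where d_{λη}(a) = da + λ η·a. -/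
open TensorProduct

set_option maxHeartbeats 1000000
set_option synthInstance.maxHeartbeats 1000000

/-- The twisted differential `d_{η,T}` on `A ⊗ V`:
`d_{η,T}(a ⊗ v) = da ⊗ v + η·a ⊗ T(v)`. -/
noncomputable def twistedDiff {A V : Type} [Ring A] [Algebra ℂ A]
    [AddCommGroup V] [Module ℂ V] (D : A →ₗ[ℂ] A) (η : A) (T : Module.End ℂ V) :
    A ⊗[ℂ] V →ₗ[ℂ] A ⊗[ℂ] V :=
  TensorProduct.map D LinearMap.id + TensorProduct.map (LinearMap.mulLeft ℂ η) T

/-- The degree-`i` graded piece `A^i ⊗ V` of `A ⊗ V`. -/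
noncomputable def gradedPieceTensor {A V : Type} [Ring A] [Algebra ℂ A]
    [AddCommGroup V] [Module ℂ V] (𝒜 : ℕ → Submodule ℂ A) (i : ℕ) :
    Submodule ℂ (A ⊗[ℂ] V) :=
  LinearMap.range (TensorProduct.map (𝒜 i).subtype (LinearMap.id : V →ₗ[ℂ] V))

/-- The subspace `A ⊗ V_λ`, where `V_λ = ker (T − λ)^{dim V}` is the generalized
eigenspace of `T` for the eigenvalue `λ`. -/
noncomputable def genEigenPart {A V : Type} [Ring A] [Algebra ℂ A]
    [AddCommGroup V] [Module ℂ V] (T : Module.End ℂ V) (μ : ℂ) :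
    Submodule ℂ (A ⊗[ℂ] V) :=
  LinearMap.range (TensorProduct.map (LinearMap.id : A →ₗ[ℂ] A)
    (LinearMap.ker ((T - μ • (1 : Module.End ℂ V)) ^ Module.finrank ℂ V)).subtype)

namespace TwistedAux

variable {A : Type} [Ring A] [Algebra ℂ A]
variable {V : Type} [AddCommGroup V] [Module ℂ V]

/-- Contraction of the second tensor factor with a linear functional. -/
noncomputable def contr (φ : V →ₗ[ℂ] ℂ) : A ⊗[ℂ] V →ₗ[ℂ] A :=
  (TensorProduct.rid ℂ A).toLinearMap ∘ₗ (LinearMap.lTensor A φ)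

@[simp] lemma contr_tmul (φ : V →ₗ[ℂ] ℂ) (a : A) (v : V) :
    contr φ (a ⊗ₜ[ℂ] v) = φ v • a := by
  simp [contr]

@[simp] lemma twistedDiff_tmul (D : A →ₗ[ℂ] A) (η : A) (T : Module.End ℂ V) (a : A) (v : V) :
    twistedDiff D η T (a ⊗ₜ[ℂ] v) = D a ⊗ₜ[ℂ] v + (η * a) ⊗ₜ[ℂ] T v := by
  simp [twistedDiff]

variable (𝒜 : ℕ → Submodule ℂ A)

lemma tmul_mem_gPT {a : A} {k : ℕ} (ha : a ∈ 𝒜 k) (v : V) :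
    a ⊗ₜ[ℂ] v ∈ gradedPieceTensor (V := V) 𝒜 k :=
  ⟨(⟨a, ha⟩ : 𝒜 k) ⊗ₜ[ℂ] v, by simp⟩

lemma gPT_induction {k : ℕ} {motive : A ⊗[ℂ] V → Prop} {x : A ⊗[ℂ] V}
    (hx : x ∈ gradedPieceTensor (V := V) 𝒜 k)
    (zero : motive 0)
    (tmul : ∀ a ∈ 𝒜 k, ∀ v : V, motive (a ⊗ₜ[ℂ] v))
    (add : ∀ x y, motive x → motive y → motive (x + y)) : motive x := by
  obtain ⟨w, rfl⟩ := hx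
  induction w using TensorProduct.induction_on with
  | zero => simpa using zero
  | tmul s v => simpa using tmul s s.2 v
  | add p q hp hq => rw [map_add]; exact add _ _ hp hq

lemma contr_mem_gPT {k : ℕ} {x : A ⊗[ℂ] V} (hx : x ∈ gradedPieceTensor (V := V) 𝒜 k)
    (φ : V →ₗ[ℂ] ℂ) : contr φ x ∈ 𝒜 k := by
  refine gPT_induction (motive := fun z => contr φ z ∈ 𝒜 k) 𝒜 hx ?_ ?_ ?_
  · simp
  · intro a ha v; rw [contr_tmul]; exact Submodule.smul_mem _ _ ha
  · intro x y hx hy; rw [map_add]; exact add_mem hx hy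

lemma twistedDiff_mem_gPT [SetLike.GradedMonoid 𝒜] {k : ℕ} {D : A →ₗ[ℂ] A} {η : A} {T : Module.End ℂ V}
    (hDdeg : ∀ i, ∀ x ∈ 𝒜 i, D x ∈ 𝒜 (i + 1)) (hη : η ∈ 𝒜 1)
    {x : A ⊗[ℂ] V} (hx : x ∈ gradedPieceTensor (V := V) 𝒜 k) :
    twistedDiff D η T x ∈ gradedPieceTensor (V := V) 𝒜 (k + 1) := by
  refine gPT_induction (motive := fun z => twistedDiff D η T z ∈ gradedPieceTensor (V := V) 𝒜 (k + 1)) 𝒜 hx ?_ ?_ ?_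
  · simp
  · intro a ha v
    rw [twistedDiff_tmul]
    have h2 : η * a ∈ 𝒜 (1 + k) := SetLike.mul_mem_graded hη ha
    rw [Nat.add_comm 1 k] at h2
    exact add_mem (tmul_mem_gPT 𝒜 (hDdeg k a ha) _) (tmul_mem_gPT 𝒜 h2 _)
  · intro x y hx hy; rw [map_add]; exact add_mem hx hy

lemma contr_twistedDiff (D : A →ₗ[ℂ] A) (η : A) (T : Module.End ℂ V) (φ : V →ₗ[ℂ] ℂ)
    (x : A ⊗[ℂ] V) :
    contr φ (twistedDiff D η T x) = D (contr φ x) + η * contr (φ ∘ₗ T) x := by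
  induction x using TensorProduct.induction_on with
  | zero => simp
  | tmul a v => simp [mul_smul_comm]
  | add x y hx hy =>
      simp only [map_add, hx, hy, mul_add]
      abel

lemma contr_smul_apply (φ : V →ₗ[ℂ] ℂ) (μ : ℂ) (x : A ⊗[ℂ] V) :
    contr (μ • φ) x = μ • contr φ x := by
  induction x using TensorProduct.induction_on with
  | zero => simp
  | tmul a v => simp [smul_smul]
  | add x y hx hy => rw [map_add, map_add, hx, hy, smul_add]

lemma contr_sub_apply (φ ψ : V →ₗ[ℂ] ℂ) (x : A ⊗[ℂ] V) :
    contr (φ - ψ) x = contr φ x - contr ψ x := by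
  induction x using TensorProduct.induction_on with
  | zero => simp
  | tmul a v => simp [sub_smul]
  | add x y hx hy =>
      rw [map_add, map_add, map_add, hx, hy]
      abel

lemma twistedDiff_sq {D : A →ₗ[ℂ] A} {η : A} (T : Module.End ℂ V)
    (hD2 : ∀ x, D (D x) = 0) (hDη : ∀ z, D (η * z) = -(η * D z)) (hηη : η * η = 0)
    (x : A ⊗[ℂ] V) : twistedDiff D η T (twistedDiff D η T x) = 0 := by
  induction x using TensorProduct.induction_on with
  | zero => simp
  | tmul a v =>
      rw [twistedDiff_tmul, map_add, twistedDiff_tmul, twistedDiff_tmul, hD2, hDη,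
        ← mul_assoc, hηη, zero_mul, zero_tmul, zero_tmul, neg_tmul]
      abel
  | add x y hx hy => rw [map_add, map_add, hx, hy, add_zero]

lemma twistedDiff_tmul_eigen {D : A →ₗ[ℂ] A} {η : A} {T : Module.End ℂ V} {v : V} {μ : ℂ}
    (hTv : T v = μ • v) (a : A) :
    twistedDiff D η T (a ⊗ₜ[ℂ] v) = (D a + μ • (η * a)) ⊗ₜ[ℂ] v := by
  rw [twistedDiff_tmul, hTv, tmul_smul, smul_tmul', add_tmul]

lemma eq_zero_of_tmul_eq_zero {a : A} {v : V} (ψ : V →ₗ[ℂ] ℂ) (hψ : ψ v = 1)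
    (h : a ⊗ₜ[ℂ] v = 0) : a = 0 := by
  have := congrArg (contr ψ) h
  simpa [hψ] using this

lemma exists_dual_one {v : V} (hv : v ≠ 0) : ∃ φ : V →ₗ[ℂ] ℂ, φ v = 1 := by
  have h : ¬ (∀ φ : Module.Dual ℂ V, φ v = 0) := by
    rw [Module.forall_dual_apply_eq_zero_iff]; exact hv
  push_neg at h
  obtain ⟨φ, hφ⟩ := h
  exact ⟨(φ v)⁻¹ • φ, by simp [inv_mul_cancel₀ hφ]⟩

lemma exists_dual_annihilator {W : Submodule ℂ V} (hW : W ≠ ⊤) :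
    ∃ (φ : V →ₗ[ℂ] ℂ) (g : V), (∀ w ∈ W, φ w = 0) ∧ φ g = 1 := by
  haveI : Nontrivial (V ⧸ W) := Submodule.Quotient.nontrivial_iff.mpr hW
  obtain ⟨x, hx⟩ := exists_ne (0 : V ⧸ W)
  obtain ⟨ψ, hψ⟩ := exists_dual_one hx
  obtain ⟨g, rfl⟩ := Submodule.mkQ_surjective W x
  refine ⟨ψ ∘ₗ W.mkQ, g, ?_, hψ⟩
  intro w hw
  have : W.mkQ w = 0 := by
    rw [Submodule.mkQ_apply, Submodule.Quotient.mk_eq_zero]; exact hw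
  simp [this]

section GP
variable {A : Type} [Ring A] [Algebra ℂ A]
variable (𝒜 : ℕ → Submodule ℂ A) [GradedAlgebra 𝒜]

noncomputable def gproj (i : ℕ) : A →ₗ[ℂ] A :=
  (𝒜 i).subtype ∘ₗ (DirectSum.component ℂ ℕ (fun j => ↥(𝒜 j)) i) ∘ₗ
    (DirectSum.decomposeLinearEquiv 𝒜).toLinearMap

lemma gproj_apply (i : ℕ) (a : A) : gproj 𝒜 i a = ↑(DirectSum.decompose 𝒜 a i) := rfl

lemma gproj_mem (i : ℕ) (a : A) : gproj 𝒜 i a ∈ 𝒜 i := (DirectSum.decompose 𝒜 a i).2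

lemma gproj_of_mem_same {i : ℕ} {a : A} (ha : a ∈ 𝒜 i) : gproj 𝒜 i a = a :=
  DirectSum.decompose_of_mem_same 𝒜 ha

lemma gproj_of_mem_ne {i j : ℕ} {a : A} (ha : a ∈ 𝒜 j) (h : j ≠ i) : gproj 𝒜 i a = 0 :=
  DirectSum.decompose_of_mem_ne 𝒜 ha h
end GP

section QE
variable {V : Type} [AddCommGroup V] [Module ℂ V]

lemma hasEigenvalue_of_quotient {T : Module.End ℂ V}
    {v : V} (hv : v ≠ 0) {μ₀ : ℂ} (hTv : T v = μ₀ • v)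
    (hTL : (ℂ ∙ v) ≤ (ℂ ∙ v).comap T)
    {μ : ℂ} (hμ : Module.End.HasEigenvalue (Submodule.mapQ _ _ T hTL) μ) :
    T.HasEigenvalue μ := by
  obtain ⟨xb, hxb⟩ := hμ.exists_hasEigenvector
  have heig : Submodule.mapQ _ _ T hTL xb = μ • xb := hxb.apply_eq_smul
  have hne : xb ≠ 0 := hxb.2
  obtain ⟨w, rfl⟩ := Submodule.mkQ_surjective _ xb
  have hw : T w - μ • w ∈ (ℂ ∙ v) := by
    rw [← Submodule.Quotient.mk_eq_zero]
    have h1 : (ℂ ∙ v).mkQ (T w - μ • w) = 0 := by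
      rw [map_sub, map_smul]
      have : (ℂ ∙ v).mkQ (T w) = Submodule.mapQ _ _ T hTL ((ℂ ∙ v).mkQ w) := by
        simp [Submodule.mapQ_apply]
      rw [this, heig, sub_self]
    simpa using h1
  obtain ⟨c, hc⟩ := Submodule.mem_span_singleton.mp hw
  by_cases hcase : μ = μ₀
  · subst hcase
    exact Module.End.hasEigenvalue_of_hasEigenvector
      ⟨Module.End.mem_eigenspace_iff.mpr hTv, hv⟩
  · have hμμ₀ : μ - μ₀ ≠ 0 := sub_ne_zero.mpr hcase
    set u := w + (c / (μ - μ₀)) • v with hu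
    have hune : u ≠ 0 := by
      intro h0
      apply hne
      have : w = -((c / (μ - μ₀)) • v) := by
        rw [eq_neg_iff_add_eq_zero]; exact h0
      rw [this, map_neg, map_smul]
      have h2 : (ℂ ∙ v).mkQ v = 0 := by
        rw [Submodule.mkQ_apply, Submodule.Quotient.mk_eq_zero]
        exact Submodule.mem_span_singleton_self v
      rw [h2, smul_zero, neg_zero]
    have hTw : T w = μ • w + c • v := by
      rw [← sub_eq_iff_eq_add']; exact hc.symm
    have hTu : T u = μ • u := by
      have hα : c + (c / (μ - μ₀)) * (μ₀ - μ) = 0 := by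
        field_simp
        ring
      have expand : T u = μ • u + (c + (c / (μ - μ₀)) * (μ₀ - μ)) • v := by
        rw [hu, map_add, map_smul, hTv, hTw]
        module
      rw [expand, hα, zero_smul, add_zero]
    exact Module.End.hasEigenvalue_of_hasEigenvector
      ⟨Module.End.mem_eigenspace_iff.mpr hTu, hune⟩
end QE


end TwistedAux

namespace TwistedAux

lemma directionA {A : Type} [Ring A] [Algebra ℂ A] {V : Type} [AddCommGroup V] [Module ℂ V]
    [FiniteDimensional ℂ V]
    (𝒜 : ℕ → Submodule ℂ A) [GradedAlgebra 𝒜]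
    {D : A →ₗ[ℂ] A} {η : A}
    (hDdeg : ∀ i, ∀ x ∈ 𝒜 i, D x ∈ 𝒜 (i + 1)) (hη : η ∈ 𝒜 1)
    (hDη : ∀ z, D (η * z) = -(η * D z)) (hηη : η * η = 0)
    (i : ℕ) (T : Module.End ℂ V) (μ : ℂ) (hμ : T.HasEigenvalue μ)
    (hexact : ∀ x ∈ gradedPieceTensor (V := V) 𝒜 i, twistedDiff D η T x = 0 →
      x ∈ Submodule.map (twistedDiff D η T) (gradedPieceTensor (V := V) 𝒜 (i - 1)))
    {a : A} (ha : a ∈ 𝒜 i) (hcoc : D a + μ • (η * a) = 0) :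
    ∃ b ∈ 𝒜 (i - 1), D b + μ • (η * b) = a := by
  obtain ⟨u₀, hu₀⟩ := hμ.exists_hasEigenvector
  have hTu₀ : T u₀ = μ • u₀ := hu₀.apply_eq_smul
  have hu₀ne : u₀ ≠ 0 := hu₀.2
  obtain ⟨ψ, hψ⟩ := exists_dual_one hu₀ne
  have hxcoc : twistedDiff D η T (a ⊗ₜ[ℂ] u₀) = 0 := by
    rw [twistedDiff_tmul_eigen hTu₀, hcoc, zero_tmul]
  obtain ⟨y, hymem, hy⟩ := Submodule.mem_map.mp (hexact _ (tmul_mem_gPT 𝒜 ha u₀) hxcoc)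
  set b := contr ψ y with hbdef
  set c := contr (ψ ∘ₗ T) y with hcdef
  have hbmem : b ∈ 𝒜 (i - 1) := contr_mem_gPT 𝒜 hymem ψ
  have hcmem : c ∈ 𝒜 (i - 1) := contr_mem_gPT 𝒜 hymem (ψ ∘ₗ T)
  have key : a = D b + η * c := by
    have h1 := congrArg (contr ψ) hy
    rw [contr_twistedDiff, contr_tmul, hψ, one_smul] at h1
    exact h1.symm
  set c' := c - μ • b with hc'def
  have hc'mem : c' ∈ 𝒜 (i - 1) := sub_mem hcmem (Submodule.smul_mem _ _ hbmem)
  set ψN := ψ ∘ₗ T - μ • ψ with hψNdef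
  have h2 := congrArg (contr ψN) hy
  rw [contr_twistedDiff] at h2
  have hψNu₀ : ψN u₀ = 0 := by
    simp [hψNdef, hTu₀, hψ]
  rw [contr_tmul, hψNu₀, zero_smul] at h2
  have hcψN : contr ψN y = c' := by
    rw [hψNdef, contr_sub_apply, contr_smul_apply, hc'def]
  rw [hcψN] at h2
  have h3 : D c' = -(η * contr (ψN ∘ₗ T) y) := add_eq_zero_iff_eq_neg.mp h2
  have hDηc' : D (η * c') = 0 := by
    rw [hDη, h3, mul_neg, neg_neg, ← mul_assoc, hηη, zero_mul]
  rcases Nat.eq_zero_or_pos i with hi | hi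
  · subst hi
    have hsum : D b + η * c ∈ 𝒜 1 := by
      have hb1 : D b ∈ 𝒜 1 := hDdeg 0 b hbmem
      have hc1 : η * c ∈ 𝒜 1 := SetLike.mul_mem_graded hη hcmem
      exact add_mem hb1 hc1
    have ha0 : a = 0 := by
      calc a = gproj 𝒜 0 a := (gproj_of_mem_same 𝒜 ha).symm
        _ = gproj 𝒜 0 (D b + η * c) := by rw [← key]
        _ = 0 := gproj_of_mem_ne 𝒜 hsum one_ne_zero
    exact ⟨0, zero_mem _, by simp [ha0]⟩
  · have hηc'mem : η * c' ∈ 𝒜 i := by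
      have h4 := SetLike.mul_mem_graded hη hc'mem
      rwa [Nat.add_comm, Nat.sub_add_cancel hi] at h4
    have hrange : LinearMap.range (T - μ • (1 : Module.End ℂ V)) ≠ ⊤ := by
      intro htop
      have hsurj : Function.Surjective (T - μ • (1 : Module.End ℂ V)) :=
        LinearMap.range_eq_top.mp htop
      have hinj : Function.Injective (T - μ • (1 : Module.End ℂ V)) :=
        (LinearMap.injective_iff_surjective).mpr hsurj
      have hz : (T - μ • (1 : Module.End ℂ V)) u₀ = 0 := by
        simp [LinearMap.sub_apply, hTu₀]
      exact hu₀ne (hinj (by rw [hz, map_zero]))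
    obtain ⟨ψ', g, hψ'W, hψ'g⟩ := exists_dual_annihilator hrange
    have hz₀coc : twistedDiff D η T ((η * c') ⊗ₜ[ℂ] g) = 0 := by
      rw [twistedDiff_tmul, hDηc', zero_tmul, ← mul_assoc, hηη, zero_mul, zero_tmul, add_zero]
    obtain ⟨z, hzmem, hz⟩ := Submodule.mem_map.mp (hexact _ (tmul_mem_gPT 𝒜 hηc'mem g) hz₀coc)
    set w := contr ψ' z with hwdef
    have hwmem : w ∈ 𝒜 (i - 1) := contr_mem_gPT 𝒜 hzmem ψ'
    have hψ'T : ψ' ∘ₗ T = μ • ψ' := by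
      ext u
      have h5 : (T - μ • (1 : Module.End ℂ V)) u ∈
          LinearMap.range (T - μ • (1 : Module.End ℂ V)) := LinearMap.mem_range_self _ u
      have h6 := hψ'W _ h5
      simp only [LinearMap.sub_apply, LinearMap.smul_apply, Module.End.one_apply, map_sub,
        map_smul] at h6
      simp only [LinearMap.comp_apply, LinearMap.smul_apply]
      exact sub_eq_zero.mp h6
    have key4 : η * c' = D w + μ • (η * w) := by
      have h7 := congrArg (contr ψ') hz
      rw [contr_twistedDiff, contr_tmul, hψ'g, one_smul, hψ'T, contr_smul_apply,
        mul_smul_comm] at h7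
      exact h7.symm
    refine ⟨b + w, add_mem hbmem hwmem, ?_⟩
    have key2 : a = (D b + μ • (η * b)) + (η * c') := by
      rw [key, hc'def, mul_sub, mul_smul_comm]
      abel
    rw [map_add, mul_add, smul_add, key2, key4]
    abel

end TwistedAux

namespace TwistedAux

section Proj
variable {A : Type} [Ring A] [Algebra ℂ A] {V : Type} [AddCommGroup V] [Module ℂ V]
variable (𝒜 : ℕ → Submodule ℂ A) [GradedAlgebra 𝒜]

lemma map_gproj_eq_self {k : ℕ} {x : A ⊗[ℂ] V}
    (hx : x ∈ gradedPieceTensor (V := V) 𝒜 k) :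
    TensorProduct.map (gproj 𝒜 k) LinearMap.id x = x := by
  refine gPT_induction (motive := fun z => TensorProduct.map (gproj 𝒜 k) LinearMap.id z = z)
    𝒜 hx ?_ ?_ ?_
  · simp
  · intro a ha u
    rw [TensorProduct.map_tmul, gproj_of_mem_same 𝒜 ha]
    rfl
  · intro p q hp hq; rw [map_add, hp, hq]

lemma map_gproj_eq_zero {j k : ℕ} (h : j ≠ k) {x : A ⊗[ℂ] V}
    (hx : x ∈ gradedPieceTensor (V := V) 𝒜 j) :
    TensorProduct.map (gproj 𝒜 k) LinearMap.id x = 0 := by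
  refine gPT_induction (motive := fun z => TensorProduct.map (gproj 𝒜 k) LinearMap.id z = 0)
    𝒜 hx ?_ ?_ ?_
  · simp
  · intro a ha u
    rw [TensorProduct.map_tmul, gproj_of_mem_ne 𝒜 ha h, zero_tmul]
  · intro p q hp hq; rw [map_add, hp, hq, add_zero]

end Proj

lemma directionB {A : Type} [Ring A] [Algebra ℂ A]
    (𝒜 : ℕ → Submodule ℂ A) [GradedAlgebra 𝒜]
    {D : A →ₗ[ℂ] A} {η : A}
    (hDdeg : ∀ i, ∀ x ∈ 𝒜 i, D x ∈ 𝒜 (i + 1)) (hη : η ∈ 𝒜 1)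
    (hD2 : ∀ x, D (D x) = 0)
    (hDη : ∀ z, D (η * z) = -(η * D z)) (hηη : η * η = 0)
    (i : ℕ) :
    ∀ (n : ℕ) (V : Type) [AddCommGroup V] [Module ℂ V] [FiniteDimensional ℂ V],
      Module.finrank ℂ V < n → ∀ (T : Module.End ℂ V),
      (∀ μ : ℂ, T.HasEigenvalue μ → ∀ a ∈ 𝒜 i, D a + μ • (η * a) = 0 →
        ∃ b ∈ 𝒜 (i - 1), D b + μ • (η * b) = a) →
      ∀ x ∈ gradedPieceTensor (V := V) 𝒜 i, twistedDiff D η T x = 0 →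
      x ∈ Submodule.map (twistedDiff D η T) (gradedPieceTensor (V := V) 𝒜 (i - 1)) := by
  intro n
  induction n with
  | zero => intro V _ _ _ h; exact absurd h (Nat.not_lt_zero _)
  | succ n IH =>
    intro V _ _ _ hn T hex x hx hcoc
    rcases subsingleton_or_nontrivial V with hV | hV
    · have hid : (LinearMap.id : V →ₗ[ℂ] V) = 0 := Subsingleton.elim _ _
      have hx0 : x = 0 := by
        have h1 : LinearMap.lTensor A (LinearMap.id : V →ₗ[ℂ] V) x = x := by
          rw [LinearMap.lTensor_id]; rfl
        rw [hid, LinearMap.lTensor_zero] at h1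
        exact h1.symm
      rw [hx0]; exact Submodule.zero_mem _
    · obtain ⟨μ₀, hμ₀⟩ := Module.End.exists_eigenvalue T
      obtain ⟨v, hv⟩ := hμ₀.exists_hasEigenvector
      have hTv : T v = μ₀ • v := hv.apply_eq_smul
      have hvne : v ≠ 0 := hv.2
      have hTL : (ℂ ∙ v) ≤ (ℂ ∙ v).comap T := by
        rw [Submodule.span_le]
        intro z hz
        rw [Set.mem_singleton_iff.mp hz]
        have : T v ∈ (ℂ ∙ v) := by
          rw [hTv]; exact Submodule.smul_mem _ _ (Submodule.mem_span_singleton_self v)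
        exact this
      set L : Submodule ℂ V := ℂ ∙ v with hLdef
      set T' : Module.End ℂ (V ⧸ L) := Submodule.mapQ L L T hTL with hT'def
      have hchain : ∀ z : A ⊗[ℂ] V,
          LinearMap.lTensor A L.mkQ (twistedDiff D η T z) =
            twistedDiff D η T' (LinearMap.lTensor A L.mkQ z) := by
        intro z
        induction z using TensorProduct.induction_on with
        | zero => simp
        | tmul a u => simp [twistedDiff_tmul, hT'def, Submodule.mapQ_apply]
        | add p q hp hq => simp only [map_add, hp, hq]
      have hrk : Module.finrank ℂ (V ⧸ L) < n := by
        have h1 := Submodule.finrank_quotient_add_finrank L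
        have h2 : Module.finrank ℂ L = 1 := finrank_span_singleton hvne
        have h3 : 0 < Module.finrank ℂ V := Module.finrank_pos
        omega
      have hex' : ∀ μ : ℂ, T'.HasEigenvalue μ → ∀ a ∈ 𝒜 i, D a + μ • (η * a) = 0 →
          ∃ b ∈ 𝒜 (i - 1), D b + μ • (η * b) = a := by
        intro μ hμ
        exact hex μ (hasEigenvalue_of_quotient hvne hTv hTL hμ)
      have hx' : LinearMap.lTensor A L.mkQ x ∈ gradedPieceTensor (V := V ⧸ L) 𝒜 i := by
        refine gPT_induction
          (motive := fun z => LinearMap.lTensor A L.mkQ z ∈ gradedPieceTensor (V := V ⧸ L) 𝒜 i)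
          𝒜 hx ?_ ?_ ?_
        · simp
        · intro a ha u; rw [LinearMap.lTensor_tmul]; exact tmul_mem_gPT 𝒜 ha _
        · intro p q hp hq; rw [map_add]; exact add_mem hp hq
      have hcoc' : twistedDiff D η T' (LinearMap.lTensor A L.mkQ x) = 0 := by
        rw [← hchain, hcoc, map_zero]
      obtain ⟨yq, hyqmem, hyq⟩ :=
        Submodule.mem_map.mp (IH (V ⧸ L) hrk T' hex' _ hx' hcoc')
      obtain ⟨w', hw'⟩ := hyqmem
      obtain ⟨w, hw⟩ :=
        LinearMap.lTensor_surjective (↥(𝒜 (i - 1))) (Submodule.mkQ_surjective L) w'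
      set y := TensorProduct.map (𝒜 (i - 1)).subtype LinearMap.id w with hydef
      have hymem : y ∈ gradedPieceTensor (V := V) 𝒜 (i - 1) := ⟨w, rfl⟩
      have hylift : LinearMap.lTensor A L.mkQ y = yq := by
        rw [← hw', ← hw]
        have hcomp : (LinearMap.lTensor A L.mkQ) ∘ₗ
            (TensorProduct.map (𝒜 (i - 1)).subtype (LinearMap.id : V →ₗ[ℂ] V))
            = (TensorProduct.map (𝒜 (i - 1)).subtype
                (LinearMap.id : (V ⧸ L) →ₗ[ℂ] (V ⧸ L))) ∘ₗ
              (LinearMap.lTensor (↥(𝒜 (i - 1))) L.mkQ) := by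
          apply TensorProduct.ext'
          intro s u
          simp
        exact LinearMap.congr_fun hcomp w
      have hker : LinearMap.lTensor A L.mkQ (x - twistedDiff D η T y) = 0 := by
        rw [map_sub, hchain, hylift, hyq, sub_self]
      have hexact2 : Function.Exact (LinearMap.lTensor A L.subtype) (LinearMap.lTensor A L.mkQ) :=
        Module.Flat.lTensor_exact A (LinearMap.exact_subtype_mkQ L)
      obtain ⟨u, hu⟩ := (hexact2 _).mp hker
      have hav : ∀ u0 : A ⊗[ℂ] ↥L, ∃ a : A, LinearMap.lTensor A L.subtype u0 = a ⊗ₜ[ℂ] v := by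
        intro u0
        induction u0 using TensorProduct.induction_on with
        | zero => exact ⟨0, by rw [map_zero, zero_tmul]⟩
        | tmul b l =>
            obtain ⟨cc, hcc⟩ := Submodule.mem_span_singleton.mp l.2
            refine ⟨cc • b, ?_⟩
            rw [LinearMap.lTensor_tmul]
            have hl : (L.subtype l : V) = cc • v := hcc.symm
            rw [hl, tmul_smul, smul_tmul']
        | add p q hp hq =>
            obtain ⟨a1, h1⟩ := hp
            obtain ⟨a2, h2⟩ := hq
            exact ⟨a1 + a2, by rw [map_add, h1, h2, add_tmul]⟩
      obtain ⟨a, ha⟩ := hav u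
      have heq : x - twistedDiff D η T y = a ⊗ₜ[ℂ] v := by rw [← hu, ha]
      obtain ⟨ψ, hψ⟩ := exists_dual_one hvne
      rcases Nat.eq_zero_or_pos i with hi | hi
      · subst hi
        have hdymem : twistedDiff D η T y ∈ gradedPieceTensor (V := V) 𝒜 1 :=
          twistedDiff_mem_gPT 𝒜 hDdeg hη hymem
        have h8 : x = (gproj 𝒜 0 a) ⊗ₜ[ℂ] v := by
          have h9 := congrArg (TensorProduct.map (gproj 𝒜 0) LinearMap.id) heq
          rw [map_sub, map_gproj_eq_self 𝒜 hx, map_gproj_eq_zero 𝒜 one_ne_zero hdymem,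
            TensorProduct.map_tmul, sub_zero] at h9
          simpa using h9
        set a' := gproj 𝒜 0 a with ha'def
        have ha'mem : a' ∈ 𝒜 0 := gproj_mem 𝒜 0 a
        have hδ : D a' + μ₀ • (η * a') = 0 := by
          have h10 : twistedDiff D η T x = 0 := hcoc
          rw [h8, twistedDiff_tmul_eigen hTv] at h10
          exact eq_zero_of_tmul_eq_zero ψ hψ h10
        obtain ⟨b, hbmem, hb⟩ := hex μ₀ hμ₀ a' ha'mem hδ
        have ha'0 : a' = 0 := by
          have hmem1 : D b + μ₀ • (η * b) ∈ 𝒜 1 :=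
            add_mem (hDdeg 0 b hbmem)
              (Submodule.smul_mem _ _ (SetLike.mul_mem_graded hη hbmem))
          calc a' = gproj 𝒜 0 a' := (gproj_of_mem_same 𝒜 ha'mem).symm
            _ = gproj 𝒜 0 (D b + μ₀ • (η * b)) := by rw [hb]
            _ = 0 := gproj_of_mem_ne 𝒜 hmem1 one_ne_zero
        rw [h8, ha'0, zero_tmul]
        exact Submodule.zero_mem _
      · have hdymem : twistedDiff D η T y ∈ gradedPieceTensor (V := V) 𝒜 i := by
          have h11 := twistedDiff_mem_gPT 𝒜 (T := T) hDdeg hη hymem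
          rwa [Nat.sub_add_cancel hi] at h11
        have h8 : x - twistedDiff D η T y = (gproj 𝒜 i a) ⊗ₜ[ℂ] v := by
          have h9 := congrArg (TensorProduct.map (gproj 𝒜 i) LinearMap.id) heq
          rw [map_sub, map_gproj_eq_self 𝒜 hx, map_gproj_eq_self 𝒜 hdymem,
            TensorProduct.map_tmul] at h9
          simpa using h9
        set a' := gproj 𝒜 i a with ha'def
        have ha'mem : a' ∈ 𝒜 i := gproj_mem 𝒜 i a
        have hδ : D a' + μ₀ • (η * a') = 0 := by
          have h12 : twistedDiff D η T (x - twistedDiff D η T y) = 0 := by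
            rw [map_sub, hcoc, twistedDiff_sq T hD2 hDη hηη, sub_zero]
          rw [h8, twistedDiff_tmul_eigen hTv] at h12
          exact eq_zero_of_tmul_eq_zero ψ hψ h12
        obtain ⟨b, hbmem, hb⟩ := hex μ₀ hμ₀ a' ha'mem hδ
        refine Submodule.mem_map.mpr
          ⟨y + b ⊗ₜ[ℂ] v, add_mem hymem (tmul_mem_gPT 𝒜 hbmem v), ?_⟩
        rw [map_add, twistedDiff_tmul_eigen hTv, hb, ← h8]
        abel

end TwistedAux

namespace TwistedAux

lemma part1 {A V : Type} [Ring A] [Algebra ℂ A] [AddCommGroup V] [Module ℂ V]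
    (D : A →ₗ[ℂ] A) (η : A) (T : Module.End ℂ V) (μ : ℂ) :
    ∀ x ∈ genEigenPart (A := A) T μ, twistedDiff D η T x ∈ genEigenPart (A := A) T μ := by
  intro x hx
  have hTK : ∀ u ∈ LinearMap.ker ((T - μ • (1 : Module.End ℂ V)) ^ Module.finrank ℂ V),
      T u ∈ LinearMap.ker ((T - μ • (1 : Module.End ℂ V)) ^ Module.finrank ℂ V) := by
    intro u hu
    have hcomm : Commute T ((T - μ • (1 : Module.End ℂ V)) ^ Module.finrank ℂ V) := by
      apply Commute.pow_right
      exact (Commute.refl T).sub_right (Commute.smul_right (Commute.one_right T) μ)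
    rw [LinearMap.mem_ker] at hu ⊢
    calc ((T - μ • (1 : Module.End ℂ V)) ^ Module.finrank ℂ V) (T u)
        = (((T - μ • (1 : Module.End ℂ V)) ^ Module.finrank ℂ V) * T) u := rfl
      _ = (T * ((T - μ • (1 : Module.End ℂ V)) ^ Module.finrank ℂ V)) u := by
          rw [hcomm.eq]
      _ = T (((T - μ • (1 : Module.End ℂ V)) ^ Module.finrank ℂ V) u) := rfl
      _ = 0 := by rw [hu, map_zero]
  have key : ∀ w : A ⊗[ℂ] ↥(LinearMap.ker ((T - μ • (1 : Module.End ℂ V)) ^ Module.finrank ℂ V)),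
      twistedDiff D η T (TensorProduct.map LinearMap.id (Submodule.subtype _) w)
        = TensorProduct.map LinearMap.id (Submodule.subtype _)
            (TensorProduct.map D LinearMap.id w
              + TensorProduct.map (LinearMap.mulLeft ℂ η) (T.restrict hTK) w) := by
    intro w
    induction w using TensorProduct.induction_on with
    | zero => simp
    | tmul a u =>
        simp only [TensorProduct.map_tmul, LinearMap.id_coe, id_eq, Submodule.coe_subtype,
          twistedDiff_tmul, map_add, LinearMap.mulLeft_apply]
        rw [LinearMap.restrict_coe_apply]
    | add p q hp hq =>
        simp only [map_add, hp, hq]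
        abel
  obtain ⟨w, rfl⟩ := hx
  exact ⟨_, (key w).symm⟩

end TwistedAux

/-- Let `A` be a finite-dimensional CDGA over `ℂ`, `V` a
finite-dimensional vector space, `T ∈ End(V)`, and `η ∈ A¹` a cocycle.  The twisted
differential `d_{η,T}(a⊗v) = da⊗v + η·a⊗T(v)` preserves each subspace `A ⊗ V_λ` for the
generalized eigenspaces `V_λ` of `T`; and for each `i`, the degree-`i` cohomology of
`(A⊗V, d_{η,T})` is nonzero (there is a degree-`i` cocycle that is not a coboundary) if and
only if there is an eigenvalue `λ` of `T` such that `H^i(A, d_{λη}) ≠ 0`, where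
`d_{λη}(a) = da + λ·η·a`. -/
theorem twistedDiff_eigenspace_decomposition {A V : Type}
    [Ring A] [Algebra ℂ A] [FiniteDimensional ℂ A]
    (𝒜 : ℕ → Submodule ℂ A) [GradedAlgebra 𝒜]
    (D : A →ₗ[ℂ] A)
    (hDdeg : ∀ i, ∀ x ∈ 𝒜 i, D x ∈ 𝒜 (i + 1))
    (hD2 : ∀ x, D (D x) = 0)
    (hLeib : ∀ i, ∀ x ∈ 𝒜 i, ∀ y : A,
      D (x * y) = D x * y + ((-1 : ℂ) ^ i) • (x * D y))
    (hcomm : ∀ i j, ∀ x ∈ 𝒜 i, ∀ y ∈ 𝒜 j, x * y = ((-1 : ℂ) ^ (i * j)) • (y * x))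
    [AddCommGroup V] [Module ℂ V] [FiniteDimensional ℂ V]
    (T : Module.End ℂ V) (η : A) (hη : η ∈ 𝒜 1) (hdη : D η = 0) :
    (∀ μ : ℂ, ∀ x ∈ genEigenPart (A := A) T μ,
        twistedDiff D η T x ∈ genEigenPart (A := A) T μ) ∧
    (∀ i : ℕ,
      ((∃ x ∈ gradedPieceTensor (V := V) 𝒜 i, twistedDiff D η T x = 0 ∧
          x ∉ Submodule.map (twistedDiff D η T) (gradedPieceTensor (V := V) 𝒜 (i - 1))) ↔
        (∃ μ : ℂ, T.HasEigenvalue μ ∧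
          ∃ a ∈ 𝒜 i, D a + μ • (η * a) = 0 ∧
            ¬ ∃ b ∈ 𝒜 (i - 1), D b + μ • (η * b) = a))) := by
  have hDη : ∀ z : A, D (η * z) = -(η * D z) := by
    intro z
    have h := hLeib 1 η hη z
    rw [hdη, zero_mul, zero_add, pow_one, neg_smul, one_smul] at h
    exact h
  have hηη : η * η = 0 := by
    have h := hcomm 1 1 η hη η hη
    simp only [mul_one, pow_one, neg_smul, one_smul] at h
    have h2 : (2 : ℂ) • (η * η) = 0 := by
      rw [two_smul]
      nth_rewrite 1 [h]
      exact neg_add_cancel _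
    rcases smul_eq_zero.mp h2 with h3 | h3
    · exact absurd h3 two_ne_zero
    · exact h3
  constructor
  · intro μ
    exact TwistedAux.part1 D η T μ
  · intro i
    constructor
    · intro hL
      by_contra hR
      push_neg at hR
      obtain ⟨x, hx, hxc, hxn⟩ := hL
      exact hxn (TwistedAux.directionB 𝒜 hDdeg hη hD2 hDη hηη i (Module.finrank ℂ V + 1) V
        (Nat.lt_succ_self _) T hR x hx hxc)
    · intro hR
      by_contra hL
      push_neg at hL
      obtain ⟨μ, hμ, a, ha, hac, han⟩ := hR
      exact han (TwistedAux.directionA 𝒜 hDdeg hη hDη hηη i T μ hμ hL ha hac)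
end

section
/- Let ψ : A' → A be a q-connected morphism of connected CDGAs with A 1-finite (dim(A⁰ ⊕ A¹) < ∞), let g be a finite-dimensional Lie algebra, θ : g → gl(V) a finite-dimensional representation, and ω' ∈ F(A', g) a flat connection with image ω = (ψ⊗id)(ω'). Then the cochain map ψ ⊗ id_V : (A' ⊗ V, d_{ω'}) → (A ⊗ V, d_ω) is q-connected, and therefore the induced map H^i(A'⊗V, d_{ω'}) → H^i(A⊗V, d_ω) is an isomorphism for i ≤ q and injective for i = q+1. In particular, for i ≤ q, ω' ∈ R^i_r(A', θ) if and only if ω ∈ R^i_r(A, θ). -/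
open TensorProduct

set_option maxHeartbeats 1000000
set_option synthInstance.maxHeartbeats 1000000

attribute [local instance 100] LieRing.ofAssociativeRing

/-- Port helper: `Submodule.addCommGroup` on submodules of a tensor product is no longer
found by instance search; supply it explicitly (same instance as before). -/
instance tensorSubmoduleAddCommGroup {k A V : Type} [Field k] [Ring A] [Algebra k A]
    [AddCommGroup V] [Module k V] (G : Submodule k (A ⊗[k] V)) : AddCommGroup ↥G :=
  Submodule.addCommGroup G

/-- The covariant derivative `d_ω` on `A ⊗ V` associated to `ω = Σᵢ aᵢ ⊗ gᵢ`:
`d_ω(a ⊗ v) = da ⊗ v + Σᵢ aᵢ·a ⊗ θ(gᵢ)(v)`. -/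
noncomputable def covDeriv {k A L V : Type} [Field k] [Ring A] [Algebra k A]
    [LieRing L] [LieAlgebra k L] [AddCommGroup V] [Module k V]
    (D : A →ₗ[k] A) (θ : L →ₗ⁅k⁆ Module.End k V)
    {n : ℕ} (a : Fin n → A) (g : Fin n → L) :
    A ⊗[k] V →ₗ[k] A ⊗[k] V :=
  TensorProduct.map D LinearMap.id +
    ∑ i, TensorProduct.map (LinearMap.mulLeft k (a i)) (θ (g i))

/-- The degree-`i` graded piece `A^i ⊗ V` of `A ⊗ V`. -/
noncomputable def gPiece {k A V : Type} [Field k] [Ring A] [Algebra k A]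
    [AddCommGroup V] [Module k V] (𝒜 : ℕ → Submodule k A) (i : ℕ) :
    Submodule k (A ⊗[k] V) :=
  LinearMap.range (TensorProduct.map (𝒜 i).subtype (LinearMap.id : V →ₗ[k] V))

/-- Degree-`i` cohomology of `(A ⊗ V, d_ω)`: cocycles in the graded piece `Gi` modulo
boundaries coming from the previous graded piece `Gp`. -/
abbrev cohAt {k A V : Type} [Field k] [Ring A] [Algebra k A]
    [AddCommGroup V] [Module k V]
    (Dw : A ⊗[k] V →ₗ[k] A ⊗[k] V) (Gi Gp : Submodule k (A ⊗[k] V)) : Type :=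
  ↥(Gi ⊓ LinearMap.ker Dw) ⧸
    Submodule.comap (Gi ⊓ LinearMap.ker Dw).subtype
      (Submodule.map Dw Gp ⊓ (Gi ⊓ LinearMap.ker Dw))

section helpers

variable {k A L V : Type} [Field k] [Ring A] [Algebra k A]
    [AddCommGroup V] [Module k V]

lemma tmul_mem_gPiece (𝒜 : ℕ → Submodule k A) {i : ℕ} {a : A} (ha : a ∈ 𝒜 i) (v : V) :
    a ⊗ₜ[k] v ∈ gPiece (V := V) 𝒜 i :=
  ⟨(⟨a, ha⟩ : 𝒜 i) ⊗ₜ v, by simp⟩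

lemma gPiece_induction (𝒜 : ℕ → Submodule k A) {i : ℕ} {x : A ⊗[k] V}
    (hx : x ∈ gPiece (V := V) 𝒜 i) {P : A ⊗[k] V → Prop}
    (h0 : P 0) (ht : ∀ a ∈ 𝒜 i, ∀ v : V, P (a ⊗ₜ v))
    (hadd : ∀ x y, P x → P y → P (x + y)) : P x := by
  obtain ⟨u, rfl⟩ := hx
  induction u with
  | zero => simpa using h0
  | tmul a v => simpa using ht a a.2 v
  | add u1 u2 h1 h2 => rw [map_add]; exact hadd _ _ h1 h2

lemma covDeriv_apply_tmul [LieRing L] [LieAlgebra k L]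
    (D : A →ₗ[k] A) (θ : L →ₗ⁅k⁆ Module.End k V)
    {n : ℕ} (a : Fin n → A) (g : Fin n → L) (b : A) (v : V) :
    covDeriv D θ a g (b ⊗ₜ v) = D b ⊗ₜ v + ∑ i, (a i * b) ⊗ₜ (θ (g i) v) := by
  simp [covDeriv, LinearMap.sum_apply]

lemma covDeriv_mem [LieRing L] [LieAlgebra k L]
    (𝒜 : ℕ → Submodule k A) [GradedAlgebra 𝒜]
    (D : A →ₗ[k] A) (hDdeg : ∀ i, ∀ x ∈ 𝒜 i, D x ∈ 𝒜 (i + 1))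
    (θ : L →ₗ⁅k⁆ Module.End k V)
    {n : ℕ} (a : Fin n → A) (ha : ∀ j, a j ∈ 𝒜 1) (g : Fin n → L)
    {i : ℕ} {x : A ⊗[k] V} (hx : x ∈ gPiece (V := V) 𝒜 i) :
    covDeriv D θ a g x ∈ gPiece (V := V) 𝒜 (i + 1) := by
  refine gPiece_induction 𝒜 hx
    (P := fun x => covDeriv D θ a g x ∈ gPiece (V := V) 𝒜 (i + 1)) (by simp)
    (fun b hb v => ?_)
    (fun x y hx hy => by
      show covDeriv D θ a g (x + y) ∈ _
      rw [map_add]; exact add_mem hx hy)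
  show covDeriv D θ a g (b ⊗ₜ v) ∈ _
  rw [covDeriv_apply_tmul]
  refine add_mem (tmul_mem_gPiece 𝒜 (hDdeg i b hb) v)
    (Submodule.sum_mem _ fun j _ => tmul_mem_gPiece 𝒜 ?_ _)
  simpa [add_comm] using SetLike.mul_mem_graded (ha j) hb

lemma gPiece_proj_eq (𝒜 : ℕ → Submodule k A) [GradedAlgebra 𝒜] {i : ℕ}
    {x : A ⊗[k] V} (hx : x ∈ gPiece (V := V) 𝒜 i) :
    LinearMap.rTensor V (GradedAlgebra.proj 𝒜 i) x = x := by
  refine gPiece_induction 𝒜 hx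
    (P := fun x => LinearMap.rTensor V (GradedAlgebra.proj 𝒜 i) x = x) (by simp)
    (fun a ha v => ?_)
    (fun x y hx hy => by
      show LinearMap.rTensor V (GradedAlgebra.proj 𝒜 i) (x + y) = x + y
      rw [map_add]
      exact congrArg₂ (· + ·) hx hy)
  show LinearMap.rTensor V (GradedAlgebra.proj 𝒜 i) (a ⊗ₜ v) = a ⊗ₜ v
  rw [LinearMap.rTensor_tmul]
  congr 1
  rw [GradedAlgebra.proj_apply, DirectSum.decompose_of_mem_same 𝒜 ha]

lemma gPiece_proj_eq_zero (𝒜 : ℕ → Submodule k A) [GradedAlgebra 𝒜] {i j : ℕ}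
    (hij : i ≠ j) {x : A ⊗[k] V} (hx : x ∈ gPiece (V := V) 𝒜 i) :
    LinearMap.rTensor V (GradedAlgebra.proj 𝒜 j) x = 0 := by
  refine gPiece_induction 𝒜 hx
    (P := fun x => LinearMap.rTensor V (GradedAlgebra.proj 𝒜 j) x = 0) (by simp)
    (fun a ha v => ?_)
    (fun x y hx hy => by
      show LinearMap.rTensor V (GradedAlgebra.proj 𝒜 j) (x + y) = 0
      rw [map_add]
      rw [show LinearMap.rTensor V (GradedAlgebra.proj 𝒜 j) x = 0 from hx,
        show LinearMap.rTensor V (GradedAlgebra.proj 𝒜 j) y = 0 from hy, add_zero])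
  show LinearMap.rTensor V (GradedAlgebra.proj 𝒜 j) (a ⊗ₜ v) = 0
  rw [LinearMap.rTensor_tmul]
  rw [GradedAlgebra.proj_apply, DirectSum.decompose_of_mem_ne 𝒜 ha hij]
  simp

end helpers

/-- abstract rank equality for the cohomology quotients -/
lemma quot_rank_eq {k M N : Type} [Field k] [AddCommGroup M] [Module k M]
    [AddCommGroup N] [Module k N]
    (Φ : M →ₗ[k] N) (d' : M →ₗ[k] M) (d : N →ₗ[k] N)
    (G'i G'p : Submodule k M) (Gi Gp : Submodule k N)
    (hchain : ∀ x, Φ (d' x) = d (Φ x))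
    (hmi : ∀ x ∈ G'i, Φ x ∈ Gi) (hmp : ∀ x ∈ G'p, Φ x ∈ Gp)
    (hsurj : ∀ x ∈ Gi, d x = 0 → ∃ x' ∈ G'i, d' x' = 0 ∧ Φ x' - x ∈ Submodule.map d Gp)
    (hinj : ∀ x' ∈ G'i, d' x' = 0 → Φ x' ∈ Submodule.map d Gp → x' ∈ Submodule.map d' G'p) :
    Module.rank k
      (↥(G'i ⊓ LinearMap.ker d') ⧸
        Submodule.comap (G'i ⊓ LinearMap.ker d').subtype
          (Submodule.map d' G'p ⊓ (G'i ⊓ LinearMap.ker d'))) =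
    Module.rank k
      (↥(Gi ⊓ LinearMap.ker d) ⧸
        Submodule.comap (Gi ⊓ LinearMap.ker d).subtype
          (Submodule.map d Gp ⊓ (Gi ⊓ LinearMap.ker d))) := by
  set Z' := G'i ⊓ LinearMap.ker d' with hZ'
  set Z := Gi ⊓ LinearMap.ker d with hZ
  set N' := Submodule.comap Z'.subtype (Submodule.map d' G'p ⊓ Z') with hN'
  set NN := Submodule.comap Z.subtype (Submodule.map d Gp ⊓ Z) with hNN
  have hzmem : ∀ z' : Z', Φ ↑z' ∈ Z := by
    intro z'
    have h := Submodule.mem_inf.mp z'.2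
    refine Submodule.mem_inf.mpr ⟨hmi _ h.1, ?_⟩
    rw [LinearMap.mem_ker, ← hchain, LinearMap.mem_ker.mp h.2, map_zero]
  let g : Z' →ₗ[k] Z := LinearMap.codRestrict Z (Φ ∘ₗ Z'.subtype) hzmem
  have hgcoe : ∀ z' : Z', ((g z' : Z) : N) = Φ ↑z' := fun _ => rfl
  let F : Z' →ₗ[k] (Z ⧸ NN) := NN.mkQ ∘ₗ g
  have hle : N' ≤ LinearMap.ker F := by
    intro z' hz'
    have h := Submodule.mem_inf.mp (Submodule.mem_comap.mp hz')
    obtain ⟨w, hw, hdw⟩ := h.1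
    have : g z' ∈ NN := by
      refine Submodule.mem_comap.mpr (Submodule.mem_inf.mpr ⟨?_, ?_⟩)
      · show Φ ↑z' ∈ Submodule.map d Gp
        rw [Submodule.subtype_apply] at hdw
        rw [← hdw, hchain]
        exact Submodule.mem_map_of_mem (hmp _ hw)
      · exact hzmem z'
    simpa [F, Submodule.Quotient.mk_eq_zero] using (Submodule.Quotient.mk_eq_zero NN).mpr this
  let Fbar := N'.liftQ F hle
  have hker : LinearMap.ker F ≤ N' := by
    intro z' hFz'
    have hgmem : g z' ∈ NN := by
      rw [LinearMap.mem_ker] at hFz'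
      simpa [F, Submodule.Quotient.mk_eq_zero] using hFz'
    have h := Submodule.mem_inf.mp (Submodule.mem_comap.mp hgmem)
    have h1 : Φ ↑z' ∈ Submodule.map d Gp := h.1
    have hz2 := Submodule.mem_inf.mp z'.2
    have := hinj ↑z' hz2.1 (LinearMap.mem_ker.mp hz2.2) h1
    exact Submodule.mem_comap.mpr (Submodule.mem_inf.mpr ⟨this, z'.2⟩)
  have hinjF : Function.Injective Fbar :=
    LinearMap.ker_eq_bot.mp (Submodule.ker_liftQ_eq_bot N' F hle hker)
  have hsurjF : Function.Surjective Fbar := by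
    intro qq
    obtain ⟨z, rfl⟩ := NN.mkQ_surjective qq
    have hz := Submodule.mem_inf.mp z.2
    obtain ⟨x', hx'G, hdx', hdiff⟩ := hsurj ↑z hz.1 (LinearMap.mem_ker.mp hz.2)
    refine ⟨N'.mkQ ⟨x', Submodule.mem_inf.mpr ⟨hx'G, LinearMap.mem_ker.mpr hdx'⟩⟩, ?_⟩
    rw [Submodule.mkQ_apply, Submodule.liftQ_apply]
    show NN.mkQ (g _) = NN.mkQ z
    rw [Submodule.mkQ_apply, Submodule.mkQ_apply, Submodule.Quotient.eq]
    refine Submodule.mem_comap.mpr (Submodule.mem_inf.mpr ⟨?_, ?_⟩)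
    · show Φ x' - ↑z ∈ Submodule.map d Gp
      exact hdiff
    · exact (g _ - z).2
  exact (LinearEquiv.ofBijective Fbar ⟨hinjF, hsurjF⟩).rank_eq

/-- Let `ψ : A' → A` be a `q`-connected morphism of connected CDGAs with
`A` `1`-finite, `θ : g → gl(V)` a finite-dimensional representation, and
`ω' = Σᵢ a'ᵢ ⊗ gᵢ ∈ F(A', g)` a flat connection with image `ω = (ψ⊗id)(ω')`.  Then the
cochain map `ψ ⊗ id_V : (A'⊗V, d_{ω'}) → (A⊗V, d_ω)` is `q`-connected (a chain map that is
an isomorphism on graded pieces in degrees `≤ q` and injective in degree `q+1`); hence the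
induced map `H^i(A'⊗V, d_{ω'}) → H^i(A⊗V, d_ω)` is an isomorphism for `i ≤ q` and injective
for `i = q+1`.  In particular, for `i ≤ q` and every `r`,
`ω' ∈ R^i_r(A', θ) ↔ ω ∈ R^i_r(A, θ)`, i.e. `dim H^i(A'⊗V) ≥ r ↔ dim H^i(A⊗V) ≥ r`. -/
theorem qConnected_cdga_map_resonance
    {k A' A L V : Type} [Field k] [CharZero k]
    [Ring A'] [Algebra k A'] [Ring A] [Algebra k A]
    (𝒜' : ℕ → Submodule k A') [GradedAlgebra 𝒜']
    (𝒜 : ℕ → Submodule k A) [GradedAlgebra 𝒜]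
    (D' : A' →ₗ[k] A') (D : A →ₗ[k] A)
    -- CDGA axioms for `A'` and `A`
    (hD'deg : ∀ i, ∀ x ∈ 𝒜' i, D' x ∈ 𝒜' (i + 1))
    (hD'2 : ∀ x, D' (D' x) = 0)
    (hLeib' : ∀ i, ∀ x ∈ 𝒜' i, ∀ y : A',
      D' (x * y) = D' x * y + ((-1 : k) ^ i) • (x * D' y))
    (hcomm' : ∀ i j, ∀ x ∈ 𝒜' i, ∀ y ∈ 𝒜' j, x * y = ((-1 : k) ^ (i * j)) • (y * x))
    (hDdeg : ∀ i, ∀ x ∈ 𝒜 i, D x ∈ 𝒜 (i + 1))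
    (hD2 : ∀ x, D (D x) = 0)
    (hLeib : ∀ i, ∀ x ∈ 𝒜 i, ∀ y : A,
      D (x * y) = D x * y + ((-1 : k) ^ i) • (x * D y))
    (hcomm : ∀ i j, ∀ x ∈ 𝒜 i, ∀ y ∈ 𝒜 j, x * y = ((-1 : k) ^ (i * j)) • (y * x))
    -- connectedness and `1`-finiteness
    (hconn' : 𝒜' 0 = Submodule.span k {1})
    (hconn : 𝒜 0 = Submodule.span k {1})
    [FiniteDimensional k ↥(𝒜 0)] [FiniteDimensional k ↥(𝒜 1)]
    -- `ψ` is a `q`-connected CDGA morphism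
    (q : ℕ) (ψ : A' →ₐ[k] A)
    (hψdeg : ∀ i, ∀ x ∈ 𝒜' i, ψ x ∈ 𝒜 i)
    (hψD : ∀ x, ψ (D' x) = D (ψ x))
    (hψbij : ∀ i ≤ q, Set.BijOn ψ (𝒜' i : Set A') (𝒜 i : Set A))
    (hψinj : Set.InjOn ψ (𝒜' (q + 1) : Set A'))
    -- a finite-dimensional representation `θ : g → gl(V)`
    [LieRing L] [LieAlgebra k L] [FiniteDimensional k L]
    [AddCommGroup V] [Module k V] [FiniteDimensional k V]
    (θ : L →ₗ⁅k⁆ Module.End k V)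
    -- the flat connection `ω' = Σᵢ a'ᵢ ⊗ gᵢ ∈ F(A', g)`
    {n : ℕ} (a' : Fin n → A') (ha' : ∀ i, a' i ∈ 𝒜' 1) (g : Fin n → L)
    (flat' : (∑ i, D' (a' i) ⊗ₜ[k] g i) +
        (1 / 2 : k) • ∑ i, ∑ j, (a' i * a' j) ⊗ₜ[k] ⁅g i, g j⁆ = (0 : A' ⊗[k] L)) :
    -- `ψ ⊗ id_V` is a chain map
    (∀ x : A' ⊗[k] V,
        TensorProduct.map ψ.toLinearMap (LinearMap.id : V →ₗ[k] V)
            (covDeriv D' θ a' g x) =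
          covDeriv D θ (fun i => ψ (a' i)) g
            (TensorProduct.map ψ.toLinearMap (LinearMap.id : V →ₗ[k] V) x)) ∧
    -- `ψ ⊗ id_V` is `q`-connected on graded pieces
    (∀ i ≤ q, Set.BijOn (TensorProduct.map ψ.toLinearMap (LinearMap.id : V →ₗ[k] V))
        (gPiece (V := V) 𝒜' i : Set (A' ⊗[k] V)) (gPiece (V := V) 𝒜 i : Set (A ⊗[k] V))) ∧
    Set.InjOn (TensorProduct.map ψ.toLinearMap (LinearMap.id : V →ₗ[k] V))
      (gPiece (V := V) 𝒜' (q + 1) : Set (A' ⊗[k] V)) ∧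
    -- the induced map in cohomology is an isomorphism for `i ≤ q` ...
    (∀ i ≤ q,
      (∀ x ∈ gPiece (V := V) 𝒜 i, covDeriv D θ (fun i => ψ (a' i)) g x = 0 →
        ∃ x' ∈ gPiece (V := V) 𝒜' i, covDeriv D' θ a' g x' = 0 ∧
          TensorProduct.map ψ.toLinearMap (LinearMap.id : V →ₗ[k] V) x' - x ∈
            Submodule.map (covDeriv D θ (fun i => ψ (a' i)) g)
              (gPiece (V := V) 𝒜 (i - 1))) ∧
      (∀ x' ∈ gPiece (V := V) 𝒜' i, covDeriv D' θ a' g x' = 0 →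
        TensorProduct.map ψ.toLinearMap (LinearMap.id : V →ₗ[k] V) x' ∈
            Submodule.map (covDeriv D θ (fun i => ψ (a' i)) g)
              (gPiece (V := V) 𝒜 (i - 1)) →
        x' ∈ Submodule.map (covDeriv D' θ a' g) (gPiece (V := V) 𝒜' (i - 1)))) ∧
    -- ... and injective for `i = q + 1`
    (∀ x' ∈ gPiece (V := V) 𝒜' (q + 1), covDeriv D' θ a' g x' = 0 →
      TensorProduct.map ψ.toLinearMap (LinearMap.id : V →ₗ[k] V) x' ∈
          Submodule.map (covDeriv D θ (fun i => ψ (a' i)) g) (gPiece (V := V) 𝒜 q) →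
      x' ∈ Submodule.map (covDeriv D' θ a' g) (gPiece (V := V) 𝒜' q)) ∧
    -- in particular, `ω' ∈ R^i_r(A', θ) ↔ ω ∈ R^i_r(A, θ)` for `i ≤ q`
    (∀ i ≤ q, ∀ r : ℕ,
      ((r : Cardinal) ≤ Module.rank k
          (cohAt (covDeriv D' θ a' g) (gPiece (V := V) 𝒜' i) (gPiece (V := V) 𝒜' (i - 1))) ↔
        (r : Cardinal) ≤ Module.rank k
          (cohAt (covDeriv D θ (fun i => ψ (a' i)) g)
            (gPiece (V := V) 𝒜 i) (gPiece (V := V) 𝒜 (i - 1))))) := by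
  set Φ := TensorProduct.map ψ.toLinearMap (LinearMap.id : V →ₗ[k] V) with hΦdef
  -- chain map
  have hchain : ∀ x : A' ⊗[k] V,
      Φ (covDeriv D' θ a' g x) = covDeriv D θ (fun i => ψ (a' i)) g (Φ x) := by
    intro x
    induction x with
    | zero => simp
    | tmul b v =>
      simp only [hΦdef, TensorProduct.map_tmul, LinearMap.id_apply, covDeriv_apply_tmul,
        map_add, map_sum, hψD, map_mul, AlgHom.toLinearMap_apply]
    | add x y hx hy => simp only [map_add, hx, hy]
  -- Φ maps graded pieces to graded pieces
  have hΦmem : ∀ j, ∀ x ∈ gPiece (V := V) 𝒜' j, Φ x ∈ gPiece (V := V) 𝒜 j := by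
    intro j x hx
    refine gPiece_induction 𝒜' hx (P := fun x => Φ x ∈ gPiece (V := V) 𝒜 j)
      (by simp) ?_ ?_
    · intro a ha v
      show Φ (a ⊗ₜ v) ∈ _
      have h : Φ (a ⊗ₜ[k] v) = ψ a ⊗ₜ[k] v := by simp [hΦdef]
      rw [h]
      exact tmul_mem_gPiece 𝒜 (hψdeg j a ha) v
    · intro x y hx hy
      show Φ (x + y) ∈ _
      rw [map_add]; exact add_mem hx hy
  -- Φ is injective on graded pieces of degree ≤ q + 1
  have hinjOn : ∀ j ≤ q + 1, Set.InjOn Φ (gPiece (V := V) 𝒜' j : Set (A' ⊗[k] V)) := by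
    intro j hj
    have hinjψ : Set.InjOn ψ ((𝒜' j : Set A')) := by
      rcases eq_or_lt_of_le hj with h | h
      · rw [h]; exact hψinj
      · exact (hψbij j (Nat.lt_succ_iff.mp h)).injOn
    set f : ↥(𝒜' j) →ₗ[k] A := ψ.toLinearMap ∘ₗ (𝒜' j).subtype with hf
    have hfinj : Function.Injective f := by
      intro u u' huu
      exact Subtype.ext (hinjψ u.2 u'.2 huu)
    have hrT : Function.Injective (LinearMap.rTensor V f) :=
      Module.Flat.rTensor_preserves_injective_linearMap f hfinj
    have key : ∀ w : ↥(𝒜' j) ⊗[k] V,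
        Φ (TensorProduct.map (𝒜' j).subtype LinearMap.id w) = LinearMap.rTensor V f w := by
      intro w
      rw [hΦdef, hf, LinearMap.rTensor_comp]
      rfl
    intro x hx y hy hxy
    obtain ⟨u, rfl⟩ := hx
    obtain ⟨u', rfl⟩ := hy
    rw [key, key] at hxy
    rw [hrT hxy]
  -- Φ is surjective onto graded pieces of degree ≤ q
  have hle : ∀ j ≤ q, ∀ x ∈ gPiece (V := V) 𝒜 j,
      ∃ x' ∈ gPiece (V := V) 𝒜' j, Φ x' = x := by
    intro j hj x hx
    have hmem : x ∈ Submodule.map Φ (gPiece (V := V) 𝒜' j) := by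
      refine gPiece_induction 𝒜 hx (P := fun x => x ∈ Submodule.map Φ (gPiece (V := V) 𝒜' j))
        (zero_mem _) ?_ (fun x y hx hy => add_mem hx hy)
      intro a ha v
      obtain ⟨a', ha', hpsi⟩ := (hψbij j hj).surjOn ha
      exact ⟨a' ⊗ₜ v, tmul_mem_gPiece 𝒜' ha' v, by simp [hΦdef, hpsi]⟩
    obtain ⟨x', hx', rfl⟩ := hmem
    exact ⟨x', hx', rfl⟩
  have hd'mem : ∀ j (y : A' ⊗[k] V), y ∈ gPiece (V := V) 𝒜' j →
      covDeriv D' θ a' g y ∈ gPiece (V := V) 𝒜' (j + 1) :=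
    fun j y hy => covDeriv_mem 𝒜' D' hD'deg θ a' ha' g hy
  have hdmem : ∀ j (y : A ⊗[k] V), y ∈ gPiece (V := V) 𝒜 j →
      covDeriv D θ (fun i => ψ (a' i)) g y ∈ gPiece (V := V) 𝒜 (j + 1) :=
    fun j y hy => covDeriv_mem 𝒜 D hDdeg θ _ (fun i => hψdeg 1 _ (ha' i)) g hy
  -- surjectivity in cohomology
  have hsurjCoh : ∀ j ≤ q, ∀ x ∈ gPiece (V := V) 𝒜 j,
      covDeriv D θ (fun i => ψ (a' i)) g x = 0 →
      ∃ x' ∈ gPiece (V := V) 𝒜' j, covDeriv D' θ a' g x' = 0 ∧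
        Φ x' - x ∈ Submodule.map (covDeriv D θ (fun i => ψ (a' i)) g)
          (gPiece (V := V) 𝒜 (j - 1)) := by
    intro j hj x hx hdx
    obtain ⟨x', hx', rfl⟩ := hle j hj x hx
    have h1 : covDeriv D' θ a' g x' ∈ gPiece (V := V) 𝒜' (j + 1) := hd'mem j x' hx'
    have h2 : Φ (covDeriv D' θ a' g x') = Φ 0 := by
      rw [hchain, hdx, map_zero]
    refine ⟨x', hx', hinjOn (j + 1) (by omega) h1 (zero_mem _) h2, ?_⟩
    rw [sub_self]; exact zero_mem _
  -- injectivity in cohomology, all degrees ≤ q + 1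
  have hinjCoh : ∀ j ≤ q + 1, ∀ x' ∈ gPiece (V := V) 𝒜' j, covDeriv D' θ a' g x' = 0 →
      Φ x' ∈ Submodule.map (covDeriv D θ (fun i => ψ (a' i)) g) (gPiece (V := V) 𝒜 (j - 1)) →
      x' ∈ Submodule.map (covDeriv D' θ a' g) (gPiece (V := V) 𝒜' (j - 1)) := by
    intro j hj x' hx' hdx' hmem
    match j, hj, hx', hmem with
    | 0, _, hx', hmem =>
      obtain ⟨y, hy, hdy⟩ := hmem
      have hy0 : y ∈ gPiece (V := V) 𝒜 0 := hy
      have h1 : Φ x' ∈ gPiece (V := V) 𝒜 1 := by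
        rw [← hdy]; exact hdmem 0 y hy0
      have h0 : Φ x' ∈ gPiece (V := V) 𝒜 0 := hΦmem 0 x' hx'
      have hz : Φ x' = 0 := by
        have e0 := gPiece_proj_eq 𝒜 h0
        have e1 := gPiece_proj_eq_zero 𝒜 (show (1 : ℕ) ≠ 0 by norm_num) h1
        rw [← e0, e1]
      have hx0 : x' = 0 := hinjOn 0 (by omega) hx' (zero_mem _) (by rw [hz, map_zero])
      rw [hx0]; exact zero_mem _
    | (m + 1), hj, hx', hmem =>
      obtain ⟨y, hy, hdy⟩ := hmem
      have hym : y ∈ gPiece (V := V) 𝒜 m := hy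
      obtain ⟨y', hy', hΦy'⟩ := hle m (by omega) y hym
      have h1 : covDeriv D' θ a' g y' ∈ gPiece (V := V) 𝒜' (m + 1) := hd'mem m y' hy'
      have h2 : Φ (covDeriv D' θ a' g y') = Φ x' := by
        rw [hchain, hΦy', hdy]
      have heq : covDeriv D' θ a' g y' = x' := hinjOn (m + 1) hj h1 hx' h2
      exact ⟨y', by simpa using hy', heq⟩
  refine ⟨hchain, ?_, hinjOn (q + 1) le_rfl, ?_, ?_, ?_⟩
  · intro i hi
    exact ⟨fun x hx => hΦmem i x hx, hinjOn i (by omega),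
      fun x hx => by
        obtain ⟨x', hx', hΦx'⟩ := hle i hi x hx
        exact ⟨x', hx', hΦx'⟩⟩
  · intro i hi
    exact ⟨hsurjCoh i hi, hinjCoh i (by omega)⟩
  · exact fun x' hx' hdx' hm => by
      simpa using hinjCoh (q + 1) le_rfl x' hx' hdx' (by simpa using hm)
  · intro i hi r
    have hrk := quot_rank_eq Φ (covDeriv D' θ a' g) (covDeriv D θ (fun i => ψ (a' i)) g)
      (gPiece (V := V) 𝒜' i) (gPiece (V := V) 𝒜' (i - 1))
      (gPiece (V := V) 𝒜 i) (gPiece (V := V) 𝒜 (i - 1))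
      hchain (hΦmem i) (hΦmem (i - 1)) (hsurjCoh i hi) (hinjCoh i (by omega))
    rw [show Module.rank k
        (cohAt (covDeriv D' θ a' g) (gPiece (V := V) 𝒜' i) (gPiece (V := V) 𝒜' (i - 1))) =
        Module.rank k
        (cohAt (covDeriv D θ (fun i => ψ (a' i)) g)
          (gPiece (V := V) 𝒜 i) (gPiece (V := V) 𝒜 (i - 1))) from hrk]
end
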